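/- Let s ≥ e₁ - 2 where e₁ ≥ n is a constant, and consider the function w(x) = |x|^{-s} on ℝⁿ \ {0}. If A(x) = (a_{ij}(x)) is a symmetric positive-definite matrix field satisfying the ellipticity bound (∑ᵢ a_{ii}(x)) / (∑_{i,j} a_{ij}(x) ξᵢ ξⱼ) ≤ e₁ for all unit vectors ξ, then ℒw(x) = -∑_{i,j} a_{ij}(x) ∂ᵢ∂ⱼ w(x) ≤ 0 for all x ≠ 0. -/

import Mathlib

open Real
open scoped RealInnerProductSpace

/-! For `x ≠ 0` the Hessian of `‖x‖ ^ p` is `p ‖x‖ ^ (p - 4) (‖x‖² I + (p - 2) x xᵀ)`, so for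
`p = -s` we get `ℒw(x) = s ‖x‖ ^ (-s - 4) (‖x‖² tr A - (s + 2) ⟨A x, x⟩)`. The ellipticity bound in
the direction `x / ‖x‖` gives `‖x‖² tr A ≤ e₁ ⟨A x, x⟩ ≤ (s + 2) ⟨A x, x⟩`, and
`s ≥ e₁ - 2 ≥ n - 2 > 0`. -/

section InnerProductSpace

variable {E : Type*} [NormedAddCommGroup E] [InnerProductSpace ℝ E]

theorem hasFDerivAt_norm_rpow_of_ne_zero (p : ℝ) {x : E} (hx : x ≠ 0) :
    HasFDerivAt (fun y : E ↦ ‖y‖ ^ p) ((p * ‖x‖ ^ (p - 2)) • innerSL ℝ x) x := by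
  apply HasStrictFDerivAt.hasFDerivAt
  convert! (hasStrictFDerivAt_norm_sq x).rpow_const (p := p / 2) (by simp [hx]) using 0
  simp_rw [← Real.rpow_natCast_mul (norm_nonneg _), ← Nat.cast_smul_eq_nsmul ℝ, smul_smul]
  ring_nf

theorem fderiv_norm_rpow_apply (p : ℝ) {x : E} (hx : x ≠ 0) (v : E) :
    fderiv ℝ (fun y : E ↦ ‖y‖ ^ p) x v = p * ‖x‖ ^ (p - 2) * ⟪x, v⟫ := by
  simp [(hasFDerivAt_norm_rpow_of_ne_zero p hx).fderiv]

theorem fderiv_fderiv_norm_rpow_apply (p : ℝ) {x : E} (hx : x ≠ 0) (u v : E) :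
    fderiv ℝ (fun y ↦ fderiv ℝ (fun z : E ↦ ‖z‖ ^ p) y v) x u
      = p * ‖x‖ ^ (p - 4) * (‖x‖ ^ 2 * ⟪u, v⟫ + (p - 2) * (⟪x, u⟫ * ⟪x, v⟫)) := by
  have hfirst : (fun y ↦ fderiv ℝ (fun z : E ↦ ‖z‖ ^ p) y v)
      =ᶠ[nhds x] fun y ↦ p * ‖y‖ ^ (p - 2) * ⟪v, y⟫ :=
    Filter.eventuallyEq_of_mem (isOpen_compl_singleton.mem_nhds hx) fun y hy ↦ by
      rw [fderiv_norm_rpow_apply p hy v, real_inner_comm]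
  have hderiv : HasFDerivAt (fun y ↦ p * ‖y‖ ^ (p - 2) * ⟪v, y⟫) _ x :=
    ((hasFDerivAt_norm_rpow_of_ne_zero (p - 2) hx).const_mul p).mul
      (innerSL ℝ v).hasFDerivAt
  rw [hfirst.fderiv_eq, hderiv.fderiv]
  have hsplit : ‖x‖ ^ (p - 2) = ‖x‖ ^ (p - 4) * ‖x‖ ^ 2 := by
    rw [← rpow_natCast, ← rpow_add (norm_pos_iff.mpr hx)]; ring_nf
  rw [show p - 2 - 2 = p - 4 by ring]
  simp only [hsplit, real_inner_comm, add_apply, smul_apply, coe_innerSL_apply, smul_eq_mul]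
  ring

end InnerProductSpace

section Euclidean

variable {ι : Type*} [Fintype ι]

theorem EuclideanSpace.fderiv_fderiv_norm_rpow_single [DecidableEq ι] (p : ℝ)
    {x : EuclideanSpace ℝ ι} (hx : x ≠ 0) (i j : ι) :
    fderiv ℝ (fun y ↦ fderiv ℝ (fun z : EuclideanSpace ℝ ι ↦ ‖z‖ ^ p) y
        (EuclideanSpace.single j 1)) x (EuclideanSpace.single i 1)
      = p * ‖x‖ ^ (p - 4) * (‖x‖ ^ 2 * (if i = j then 1 else 0) + (p - 2) * (x i * x j)) := by
  rw [fderiv_fderiv_norm_rpow_apply p hx]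
  simp [EuclideanSpace.inner_single_right, eq_comm]

theorem Matrix.sum_sum_mul_ite_add_mul [DecidableEq ι] (A : Matrix ι ι ℝ) (a b : ℝ)
    (x : ι → ℝ) :
    ∑ i, ∑ j, A i j * (a * (if i = j then 1 else 0) + b * (x i * x j))
      = a * ∑ i, A i i + b * ∑ i, ∑ j, A i j * x i * x j := by
  simp only [mul_add, Finset.sum_add_distrib, mul_ite, mul_one, mul_zero, Finset.sum_ite_eq,
    Finset.mem_univ, if_true, Finset.mul_sum]
  congr 1
  · exact Finset.sum_congr rfl fun i _ ↦ mul_comm _ _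
  · exact Finset.sum_congr rfl fun i _ ↦ Finset.sum_congr rfl fun j _ ↦ by ring

theorem Matrix.PosDef.sum_sum_mul_mul_pos {A : Matrix ι ι ℝ} (hA : A.PosDef) {x : ι → ℝ}
    (hx : x ≠ 0) : 0 < ∑ i, ∑ j, A i j * x i * x j := by
  refine (hA.dotProduct_mulVec_pos hx).trans_eq ?_
  simp only [star_trivial, dotProduct, mulVec, Finset.mul_sum]
  exact Finset.sum_congr rfl fun i _ ↦ Finset.sum_congr rfl fun j _ ↦ by ring

theorem Matrix.sum_sum_mul_smul_mul_smul (A : Matrix ι ι ℝ) (c : ℝ) (x : EuclideanSpace ℝ ι) :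
    ∑ i, ∑ j, A i j * (c • x) i * (c • x) j = c ^ 2 * ∑ i, ∑ j, A i j * x i * x j := by
  simp only [PiLp.smul_apply, smul_eq_mul, Finset.mul_sum]
  exact Finset.sum_congr rfl fun i _ ↦ Finset.sum_congr rfl fun j _ ↦ by ring

theorem Matrix.PosDef.sq_norm_mul_trace_le {A : Matrix ι ι ℝ} (hA : A.PosDef) {e : ℝ}
    (hell : ∀ ξ : EuclideanSpace ℝ ι, ‖ξ‖ = 1 →
      (∑ i, A i i) / (∑ i, ∑ j, A i j * ξ i * ξ j) ≤ e)
    {x : EuclideanSpace ℝ ι} (hx : x ≠ 0) :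
    ‖x‖ ^ 2 * ∑ i, A i i ≤ e * ∑ i, ∑ j, A i j * x i * x j := by
  have hnorm : ‖x‖ ≠ 0 := norm_ne_zero_iff.mpr hx
  have hunit : ‖‖x‖⁻¹ • x‖ = 1 := by
    rw [norm_smul, norm_inv, norm_norm, inv_mul_cancel₀ hnorm]
  have hQ : 0 < ∑ i, ∑ j, A i j * x i * x j :=
    hA.sum_sum_mul_mul_pos (by simpa using hx)
  have h := hell _ hunit
  rw [Matrix.sum_sum_mul_smul_mul_smul, div_le_iff₀ (by positivity)] at h
  calc ‖x‖ ^ 2 * ∑ i, A i i ≤ ‖x‖ ^ 2 * (e * ((‖x‖⁻¹) ^ 2 * ∑ i, ∑ j, A i j * x i * x j)) := by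
        gcongr
    _ = e * ∑ i, ∑ j, A i j * x i * x j := by field_simp

end Euclidean

theorem stmt0_general {n : ℕ} (hn : 3 ≤ n) (e₁ s : ℝ) (he₁ : (n : ℝ) ≤ e₁) (hs : e₁ - 2 ≤ s)
    (A : EuclideanSpace ℝ (Fin n) → Matrix (Fin n) (Fin n) ℝ)
    (hpos : ∀ x, (A x).PosDef)
    (hell : ∀ (x : EuclideanSpace ℝ (Fin n)) (ξ : EuclideanSpace ℝ (Fin n)), ‖ξ‖ = 1 →
      (∑ i, A x i i) / (∑ i, ∑ j, A x i j * ξ i * ξ j) ≤ e₁)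
    (w : EuclideanSpace ℝ (Fin n) → ℝ) (hw : ∀ x, w x = ‖x‖ ^ (-s)) :
    ∀ x : EuclideanSpace ℝ (Fin n), x ≠ 0 →
      -(∑ i, ∑ j, A x i j *
        fderiv ℝ (fun y => fderiv ℝ w y (EuclideanSpace.single j (1 : ℝ))) x
          (EuclideanSpace.single i (1 : ℝ))) ≤ 0 := by
  intro x hx
  obtain rfl : w = fun z ↦ ‖z‖ ^ (-s) := funext hw
  have hs₀ : 0 ≤ s := by
    have : (3 : ℝ) ≤ n := by exact_mod_cast hn
    linarith
  have htrace := (hpos x).sq_norm_mul_trace_le (hell x) hx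
  simp_rw [EuclideanSpace.fderiv_fderiv_norm_rpow_single (-s) hx, mul_left_comm (A x _ _),
    ← Finset.mul_sum, Matrix.sum_sum_mul_ite_add_mul]
  set Q := ∑ i, ∑ j, A x i j * x i * x j
  have hQ : 0 < Q := (hpos x).sum_sum_mul_mul_pos (by simpa using hx)
  calc _ = -(s * ‖x‖ ^ (-s - 4) * ((s + 2) * Q - ‖x‖ ^ 2 * ∑ i, A x i i)) := by ring
    _ ≤ 0 := neg_nonpos.mpr (mul_nonneg (by positivity)
      (sub_nonneg.mpr (htrace.trans (mul_le_mul_of_nonneg_right (by linarith) hQ.le))))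

/-- For `s ≥ e₁ - 2` with `e₁ ≥ n`, the function `w x = ‖x‖^(-s)` is
sub-elliptic away from the origin for any uniformly elliptic symmetric coefficient
matrix field `A` with ellipticity function bounded by `e₁`:
`ℒw(x) = -∑ᵢⱼ aᵢⱼ(x) ∂ᵢ∂ⱼ w(x) ≤ 0` for `x ≠ 0`. -/
theorem stmt0 {n : ℕ} (hn : 3 ≤ n) (e₁ s : ℝ) (he₁ : (n : ℝ) ≤ e₁) (hs : e₁ - 2 ≤ s)
    (A : EuclideanSpace ℝ (Fin n) → Matrix (Fin n) (Fin n) ℝ)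
    (hsymm : ∀ x, (A x).IsSymm) (hpos : ∀ x, (A x).PosDef)
    (hell : ∀ (x : EuclideanSpace ℝ (Fin n)) (ξ : EuclideanSpace ℝ (Fin n)), ‖ξ‖ = 1 →
      (∑ i, A x i i) / (∑ i, ∑ j, A x i j * ξ i * ξ j) ≤ e₁)
    (w : EuclideanSpace ℝ (Fin n) → ℝ) (hw : ∀ x, w x = ‖x‖ ^ (-s)) :
    ∀ x : EuclideanSpace ℝ (Fin n), x ≠ 0 →
      -(∑ i, ∑ j, A x i j *
        fderiv ℝ (fun y => fderiv ℝ w y (EuclideanSpace.single j (1 : ℝ))) x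
          (EuclideanSpace.single i (1 : ℝ))) ≤ 0 :=
  stmt0_general hn e₁ s he₁ hs A hpos hell w hw
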